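/- arXiv:1211.2359 — 4 statements merged into one kernel-verified Lean document; each statement's English description precedes it below -/
import Mathlib

section
/- Suppose shifts s₁ ≤ s₃ ≤ s₂ are such that for every example i, e_i + s₁ > 0 if and only if e_i + s₂ > 0 (the set of over-estimated examples is the same under both shifts). Then for every i, e_i + s₃ > 0 iff e_i + s₁ > 0, and the three points (OVER(s), UNDER(s)) for s ∈ {s₁, s₂, s₃} are collinear, where OVER(s) = ∑_{i : e_i + s > 0} (e_i + s) and UNDER(s) = ∑_{i : e_i + s ≤ 0} (e_i + s). -/
/-!
Positivity of `x + s` is monotone in `s`, so the over-estimated set `A` at `s₁` and `s₂` is also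
the one at every `s₃` between them. While `A` is fixed, `OVER e s` and `UNDER e s` are affine in
`s`, with slopes `#A` and `#Aᶜ`, so the points `(OVER e s, UNDER e s)` lie on one line.
-/

open Finset

/-- Total over-estimation for error vector `e` with constant shift `s`. -/
noncomputable def OVER {n : ℕ} (e : Fin n → ℝ) (s : ℝ) : ℝ :=
  ∑ i ∈ univ.filter (fun i => 0 < e i + s), (e i + s)

/-- Total under-estimation for error vector `e` with constant shift `s`. -/
noncomputable def UNDER {n : ℕ} (e : Fin n → ℝ) (s : ℝ) : ℝ :=
  ∑ i ∈ univ.filter (fun i => e i + s ≤ 0), (e i + s)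

theorem add_pos_iff_of_le_of_le {α : Type*} [AddCommMonoid α] [PartialOrder α]
    [IsOrderedAddMonoid α] {x s₁ s₂ s₃ : α} (h13 : s₁ ≤ s₃) (h32 : s₃ ≤ s₂)
    (h : 0 < x + s₁ ↔ 0 < x + s₂) : 0 < x + s₃ ↔ 0 < x + s₁ :=
  ⟨fun h3 => h.2 (h3.trans_le (by gcongr)), fun h1 => h1.trans_le (by gcongr)⟩

theorem Finset.sum_add_const_sub_sum_add_const {ι R : Type*} [CommRing R] (A : Finset ι)
    (f : ι → R) (s t : R) :
    ∑ i ∈ A, (f i + s) - ∑ i ∈ A, (f i + t) = #A * (s - t) := by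
  simp only [sum_add_distrib, sum_const, nsmul_eq_mul]
  ring

section
variable {n : ℕ} {e : Fin n → ℝ} {s t : ℝ}

theorem OVER_sub_OVER (h : ∀ i, 0 < e i + s ↔ 0 < e i + t) :
    OVER e s - OVER e t = #{i | 0 < e i + t} * (s - t) := by
  rw [OVER, OVER, filter_congr fun i _ => h i, sum_add_const_sub_sum_add_const]

theorem UNDER_sub_UNDER (h : ∀ i, 0 < e i + s ↔ 0 < e i + t) :
    UNDER e s - UNDER e t = #{i | e i + t ≤ 0} * (s - t) := by
  have h' : ∀ i, e i + s ≤ 0 ↔ e i + t ≤ 0 := fun i => by simp only [← not_lt, h i]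
  rw [UNDER, UNDER, filter_congr fun i _ => h' i, sum_add_const_sub_sum_add_const]

end

theorem shifts_collinear (n : ℕ) (e : Fin n → ℝ) (s₁ s₂ s₃ : ℝ)
    (h13 : s₁ ≤ s₃) (h32 : s₃ ≤ s₂)
    (hsame : ∀ i, 0 < e i + s₁ ↔ 0 < e i + s₂) :
    (∀ i, (0 < e i + s₃ ↔ 0 < e i + s₁)) ∧
    (OVER e s₂ - OVER e s₁) * (UNDER e s₃ - UNDER e s₁) =
      (OVER e s₃ - OVER e s₁) * (UNDER e s₂ - UNDER e s₁) := by
  have h31 : ∀ i, 0 < e i + s₃ ↔ 0 < e i + s₁ :=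
    fun i => add_pos_iff_of_le_of_le h13 h32 (hsame i)
  have h21 : ∀ i, 0 < e i + s₂ ↔ 0 < e i + s₁ := fun i => (hsame i).symm
  refine ⟨h31, ?_⟩
  rw [OVER_sub_OVER h21, OVER_sub_OVER h31, UNDER_sub_UNDER h21, UNDER_sub_UNDER h31]
  ring
end

section
/- Let e : Fin n → ℝ be sorted in decreasing order (e_1 ≥ e_2 ≥ ... ≥ e_n) with differences d_i = e_i - e_{i+1} for i = 1, ..., n-1. Define points p_i = (o_i, u_i) where o_i = ∑_{j=1}^{i-1} j·d_j and u_i = -∑_{j=i}^{n-1} (n-j)·d_j. Then the area over the RROC curve, AOC = -∑_{i=1}^{n-1} ((u_i + u_{i+1})/2)·(o_{i+1} - o_i), equals σ²·n²/2, where σ² = (∑ e_i²)/n - μ² is the population variance of e and μ = (∑ e_i)/n. -/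
/-! Since `-u_i = ∑_{j ≥ i} (e_i - e_j)`, the `k`-th trapezoid has mean height
`∑_{j>k} ((e_k + e_{k+1})/2 - e_j)` and width `k d_k`, hence area
`(k/2) ∑_{j>k} ((e_k - e_j)² - (e_{k+1} - e_j)²)`. Exchanging the two sums and summing by parts
in `k` collapses the AOC to `(1/2) ∑_{k<j} (e_k - e_j)²`, which is
`(n ∑ e_j² - (∑ e_j)²)/2 = σ² n²/2` by Lagrange's identity. -/

open Finset

section

variable {R : Type*}

section CommRing

variable [CommRing R]

theorem sum_Ico_sub_succ (e : ℕ → R) {i n : ℕ} (hin : i ≤ n) :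
    ∑ j ∈ Ico i n, (e j - e (j + 1)) = e i - e n := by
  simpa only [Pi.neg_apply, neg_sub_neg] using sum_Ico_sub (-e) hin

theorem sum_Ico_mul_sub_succ_eq_sum_Icc (e : ℕ → R) {i n : ℕ} (hin : i ≤ n) :
    ∑ j ∈ Ico i n, ((n : R) - j) * (e j - e (j + 1)) = ∑ j ∈ Icc i n, (e i - e j) := by
  induction n, hin using Nat.le_induction with
  | base => simp
  | succ n hin ih =>
    calc ∑ j ∈ Ico i (n + 1), ((↑(n + 1) : R) - j) * (e j - e (j + 1))
        = ∑ j ∈ Ico i (n + 1), ((n : R) - j) * (e j - e (j + 1))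
          + ∑ j ∈ Ico i (n + 1), (e j - e (j + 1)) := by
          rw [← sum_add_distrib]; exact sum_congr rfl fun j _ ↦ by push_cast; ring
      _ = ∑ j ∈ Icc i n, (e i - e j) + (e i - e (n + 1)) := by
          rw [sum_Ico_succ_top hin, ih, sum_Ico_sub_succ e (by omega)]; simp
      _ = ∑ j ∈ Icc i (n + 1), (e i - e j) := (sum_Icc_succ_top (by omega) _).symm

theorem sum_Ico_one_mul_sub_succ (h : ℕ → R) {m : ℕ} (hm : 1 ≤ m) :
    ∑ k ∈ Ico 1 m, (k : R) * (h k - h (k + 1))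
      = ∑ k ∈ Ico 1 m, h k - ((m : R) - 1) * h m := by
  induction m, hm using Nat.le_induction with
  | base => simp
  | succ m hm ih => rw [sum_Ico_succ_top hm, sum_Ico_succ_top hm, ih]; push_cast; ring

theorem sum_Ico_mul_sum_Ioc_sub_succ (g : ℕ → ℕ → R) (hg : ∀ j, g j j = 0) (n : ℕ) :
    ∑ k ∈ Ico 1 n, (k : R) * ∑ j ∈ Ioc k n, (g k j - g (k + 1) j)
      = ∑ j ∈ Icc 1 n, ∑ k ∈ Ico 1 j, g k j := by
  simp_rw [mul_sum]
  rw [sum_comm' (t' := Icc 1 n) (s' := fun j ↦ Ico 1 j)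
    (fun k j ↦ by simp only [mem_Ico, mem_Ioc, mem_Icc]; omega)]
  refine sum_congr rfl fun j hj ↦ ?_
  rw [sum_Ico_one_mul_sub_succ (g · j) (mem_Icc.mp hj).1, hg, mul_zero, sub_zero]

theorem sum_Icc_sum_Ico_sub_sq (e : ℕ → R) (n : ℕ) :
    ∑ j ∈ Icc 1 n, ∑ k ∈ Ico 1 j, (e k - e j) ^ 2
      = n * ∑ j ∈ Icc 1 n, e j ^ 2 - (∑ j ∈ Icc 1 n, e j) ^ 2 := by
  induction n with
  | zero => simp
  | succ n ih =>
    have hlast : ∑ k ∈ Ico 1 (n + 1), (e k - e (n + 1)) ^ 2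
        = ∑ k ∈ Icc 1 n, e k ^ 2 - 2 * e (n + 1) * ∑ k ∈ Icc 1 n, e k
          + n * e (n + 1) ^ 2 := by
      simp only [Ico_add_one_right_eq_Icc, sub_sq, sum_add_distrib, sum_sub_distrib, sum_const,
        Nat.card_Icc, nsmul_eq_mul, ← sum_mul, ← mul_sum]
      push_cast; ring
    rw [sum_Icc_succ_top (by omega), sum_Icc_succ_top (by omega), sum_Icc_succ_top (by omega), ih,
      hlast]
    push_cast; ring

end CommRing

theorem trapezoid_eq_sum_sq_sub_sq [Field R] (e : ℕ → R) {k n : ℕ} (hkn : k < n) :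
    (∑ j ∈ Icc k n, (e k - e j) + ∑ j ∈ Icc (k + 1) n, (e (k + 1) - e j)) / 2
        * (e k - e (k + 1))
      = (∑ j ∈ Ioc k n, ((e k - e j) ^ 2 - (e (k + 1) - e j) ^ 2)) / 2 := by
  rw [Icc_eq_cons_Ioc hkn.le, sum_cons, sub_self, zero_add, Icc_add_one_left_eq_Ioc,
    ← sum_add_distrib, sum_div, sum_mul, sum_div]
  exact sum_congr rfl fun j _ ↦ by ring

end

theorem aoc_eq_variance_general (n : ℕ) (e d o u : ℕ → ℝ) (AOC μ σ2 : ℝ)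
    (hd : ∀ j, d j = e j - e (j + 1))
    (ho : ∀ i, o i = ∑ j ∈ Finset.Ico 1 i, (j : ℝ) * d j)
    (hu : ∀ i, u i = -∑ j ∈ Finset.Ico i n, ((n : ℝ) - j) * d j)
    (hAOC : AOC = -∑ i ∈ Finset.Ico 1 n, ((u i + u (i + 1)) / 2) * (o (i + 1) - o i))
    (hμ : μ = (∑ i ∈ Finset.Icc 1 n, e i) / n)
    (hσ : σ2 = (∑ i ∈ Finset.Icc 1 n, (e i) ^ 2) / n - μ ^ 2) :
    AOC = σ2 * (n : ℝ) ^ 2 / 2 := by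
  simp only [hd] at ho hu
  have hterm : ∀ k ∈ Ico 1 n, -((u k + u (k + 1)) / 2 * (o (k + 1) - o k))
      = k * (∑ j ∈ Ioc k n, ((e k - e j) ^ 2 - (e (k + 1) - e j) ^ 2)) / 2 := by
    intro k hk
    obtain ⟨hk1, hkn⟩ := mem_Ico.mp hk
    have hdo : o (k + 1) - o k = k * (e k - e (k + 1)) := by
      rw [ho, ho, sum_Ico_succ_top hk1, add_sub_cancel_left]
    have hu' : ∀ i ≤ n, u i = -∑ j ∈ Icc i n, (e i - e j) := fun i hi ↦ by
      rw [hu, sum_Ico_mul_sub_succ_eq_sum_Icc e hi]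
    rw [hdo, hu' k hkn.le, hu' (k + 1) hkn, mul_div_assoc, ← trapezoid_eq_sum_sq_sub_sq e hkn]
    ring
  have hvar : σ2 * n ^ 2 = n * ∑ j ∈ Icc 1 n, e j ^ 2 - (∑ j ∈ Icc 1 n, e j) ^ 2 := by
    rcases n.eq_zero_or_pos with rfl | hn_pos
    · simp [hσ]
    · rw [hσ, hμ]; field_simp
  rw [hAOC, ← sum_neg_distrib, sum_congr rfl hterm, ← sum_div,
    sum_Ico_mul_sum_Ioc_sub_succ (fun k j ↦ (e k - e j) ^ 2) (fun j ↦ by simp),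
    sum_Icc_sum_Ico_sub_sq, hvar]

/-- The AOC of the RROC curve equals the population error variance times `n²/2`. -/
theorem aoc_eq_variance (n : ℕ) (hn : 1 ≤ n) (e d o u : ℕ → ℝ) (AOC μ σ2 : ℝ)
    (hdec : ∀ i, 1 ≤ i → i < n → e (i + 1) ≤ e i)
    (hd : ∀ j, d j = e j - e (j + 1))
    (ho : ∀ i, o i = ∑ j ∈ Finset.Ico 1 i, (j : ℝ) * d j)
    (hu : ∀ i, u i = -∑ j ∈ Finset.Ico i n, ((n : ℝ) - j) * d j)
    (hAOC : AOC = -∑ i ∈ Finset.Ico 1 n, ((u i + u (i + 1)) / 2) * (o (i + 1) - o i))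
    (hμ : μ = (∑ i ∈ Finset.Icc 1 n, e i) / n)
    (hσ : σ2 = (∑ i ∈ Finset.Icc 1 n, (e i) ^ 2) / n - μ ^ 2) :
    AOC = σ2 * (n : ℝ) ^ 2 / 2 :=
  aoc_eq_variance_general n e d o u AOC μ σ2 hd ho hu hAOC hμ hσ
end

section
/- Two models m₁ and m₂ with RROC points (O₁, U₁) and (O₂, U₂), O₁ ≠ O₂, incur equal asymmetric loss exactly for the asymmetry α* = 1/(1 + slope), where slope = (U₂ - U₁)/(O₂ - O₁) is the slope of the segment connecting the two points (assuming slope > -1 and slope finite). That is, -2α*·U₁ + 2(1-α*)·O₁ = -2α*·U₂ + 2(1-α*)·O₂. -/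
theorem asymLoss_eq_of_slope {R : Type*} [CommRing R] {α s O₁ U₁ O₂ U₂ : R}
    (hslope : U₂ - U₁ = s * (O₂ - O₁)) (hα : α * (1 + s) = 1) :
    -2 * α * U₁ + 2 * (1 - α) * O₁ = -2 * α * U₂ + 2 * (1 - α) * O₂ := by
  -- the difference of the two losses is `2 (O₂ - O₁) (α (1 + s) - 1)`
  linear_combination 2 * α * hslope + 2 * (O₂ - O₁) * hα

theorem equal_loss_asymmetry_general (O₁ U₁ O₂ U₂ s αstar : ℝ)
    (hne : O₁ ≠ O₂)
    (hs : s = (U₂ - U₁) / (O₂ - O₁))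
    (hsgt : -1 < s)
    (hα : αstar = 1 / (1 + s)) :
    -2 * αstar * U₁ + 2 * (1 - αstar) * O₁ = -2 * αstar * U₂ + 2 * (1 - αstar) * O₂ := by
  apply asymLoss_eq_of_slope (s := s)
  · rw [hs, div_mul_cancel₀ _ (sub_ne_zero.mpr hne.symm)]
  · rw [hα, one_div_mul_cancel (by linarith)]

theorem equal_loss_asymmetry (O₁ U₁ O₂ U₂ s αstar : ℝ)
    (hO₁ : 0 ≤ O₁) (hU₁ : U₁ ≤ 0) (hO₂ : 0 ≤ O₂) (hU₂ : U₂ ≤ 0)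
    (hne : O₁ ≠ O₂)
    (hs : s = (U₂ - U₁) / (O₂ - O₁))
    (hsgt : -1 < s)
    (hα : αstar = 1 / (1 + s)) :
    -2 * αstar * U₁ + 2 * (1 - αstar) * O₁ = -2 * αstar * U₂ + 2 * (1 - αstar) * O₂ :=
  equal_loss_asymmetry_general O₁ U₁ O₂ U₂ s αstar hne hs hsgt hα
end

section
/- A hybrid model formed by choosing each prediction from model m₁ with probability p and from m₂ with probability 1-p has expected RROC point equal to the convex combination p·(O₁,U₁) + (1-p)·(O₂,U₂) of the individual points, provided for each example both models' errors have the same sign. In particular, under this same-sign assumption, every point on the segment between two RROC points is achievable in expectation. -/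
/-!
Choosing the model independently per example makes the `i`-th chosen error a Bernoulli
mixture of `e₁ i` and `e₂ i`, and `OVER`, `UNDER` are sums over examples of a function of the
`i`-th error alone (its positive, resp. nonpositive, part). Linearity of expectation therefore
gives the convex combination.
-/

open Finset

section ProductWeights

variable {ι α R : Type*} [Fintype ι] [DecidableEq ι] [Fintype α] [CommSemiring R]

theorem sum_prod_weight_mul_apply {w : α → R} (hw : ∑ a, w a = 1) (f : α → R) (i : ι) :
    ∑ c : ι → α, (∏ j, w (c j)) * f (c i) = ∑ a, w a * f a := by
  -- absorb `f (c i)` into the `i`-th factor, so that the sum over `c` factors coordinatewise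
  have hfactor : ∀ c : ι → α,
      (∏ j, w (c j)) * f (c i) = ∏ j, w (c j) * (if j = i then f (c j) else 1) := by
    intro c
    rw [prod_mul_distrib, prod_ite_eq' univ i]
    simp
  have hcoord : ∀ j, ∑ a, w a * (if j = i then f a else 1) =
      if j = i then ∑ a, w a * f a else 1 := by
    intro j
    split_ifs
    · rfl
    · simp [hw]
  simp_rw [hfactor]
  rw [← Fintype.prod_sum (fun j a => w a * if j = i then f a else 1)]
  simp_rw [hcoord]
  simp

theorem sum_prod_weight_mul_sum_apply {w : α → R} (hw : ∑ a, w a = 1) (g : ι → α → R) :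
    ∑ c : ι → α, (∏ j, w (c j)) * ∑ i, g i (c i) = ∑ i, ∑ a, w a * g i a := by
  simp_rw [mul_sum]
  rw [sum_comm]
  simp_rw [sum_prod_weight_mul_apply hw]

end ProductWeights

section Hybrid

variable {ι R : Type*} [Fintype ι] [DecidableEq ι] [CommRing R]

theorem sum_bernoulli_mul_sum_apply (p : R) (g : ι → Bool → R) :
    ∑ c : ι → Bool, (∏ j, (if c j then p else 1 - p)) * ∑ i, g i (c i) =
      p * ∑ i, g i true + (1 - p) * ∑ i, g i false := by
  have hw : ∑ b : Bool, (if b then p else 1 - p) = 1 := by simp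
  refine (sum_prod_weight_mul_sum_apply (w := fun b => if b then p else 1 - p) hw g).trans ?_
  simp [sum_add_distrib, mul_sum]

theorem sum_bernoulli_mul_sum_filter_ite (p : R) (e₁ e₂ : ι → R) (P : R → Prop)
    [DecidablePred P] :
    ∑ c : ι → Bool, (∏ j, (if c j then p else 1 - p)) *
        (∑ i ∈ univ.filter (fun i => P (if c i then e₁ i else e₂ i)),
          (if c i then e₁ i else e₂ i)) =
      p * (∑ i ∈ univ.filter (fun i => P (e₁ i)), e₁ i) +
        (1 - p) * (∑ i ∈ univ.filter (fun i => P (e₂ i)), e₂ i) := by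
  simp_rw [sum_filter]
  exact sum_bernoulli_mul_sum_apply p
    (fun i b => if P (if b then e₁ i else e₂ i) then (if b then e₁ i else e₂ i) else 0)

end Hybrid

theorem hybrid_expected_point_general (n : ℕ) (e₁ e₂ : Fin n → ℝ) (p : ℝ) :
    (∑ c : Fin n → Bool, (∏ i, (if c i then p else 1 - p)) *
        (∑ i ∈ univ.filter (fun i => 0 < (if c i then e₁ i else e₂ i)),
          (if c i then e₁ i else e₂ i)) =
      p * (∑ i ∈ univ.filter (fun i => 0 < e₁ i), e₁ i) +
        (1 - p) * (∑ i ∈ univ.filter (fun i => 0 < e₂ i), e₂ i)) ∧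
    (∑ c : Fin n → Bool, (∏ i, (if c i then p else 1 - p)) *
        (∑ i ∈ univ.filter (fun i => (if c i then e₁ i else e₂ i) ≤ 0),
          (if c i then e₁ i else e₂ i)) =
      p * (∑ i ∈ univ.filter (fun i => e₁ i ≤ 0), e₁ i) +
        (1 - p) * (∑ i ∈ univ.filter (fun i => e₂ i ≤ 0), e₂ i)) :=
  ⟨sum_bernoulli_mul_sum_filter_ite p e₁ e₂ (0 < ·),
    sum_bernoulli_mul_sum_filter_ite p e₁ e₂ (· ≤ 0)⟩

theorem hybrid_expected_point (n : ℕ) (e₁ e₂ : Fin n → ℝ) (p : ℝ)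
    (hp0 : 0 ≤ p) (hp1 : p ≤ 1)
    (hsign : ∀ i, 0 < e₁ i ↔ 0 < e₂ i) :
    (∑ c : Fin n → Bool, (∏ i, (if c i then p else 1 - p)) *
        (∑ i ∈ univ.filter (fun i => 0 < (if c i then e₁ i else e₂ i)),
          (if c i then e₁ i else e₂ i)) =
      p * (∑ i ∈ univ.filter (fun i => 0 < e₁ i), e₁ i) +
        (1 - p) * (∑ i ∈ univ.filter (fun i => 0 < e₂ i), e₂ i)) ∧
    (∑ c : Fin n → Bool, (∏ i, (if c i then p else 1 - p)) *
        (∑ i ∈ univ.filter (fun i => (if c i then e₁ i else e₂ i) ≤ 0),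
          (if c i then e₁ i else e₂ i)) =
      p * (∑ i ∈ univ.filter (fun i => e₁ i ≤ 0), e₁ i) +
        (1 - p) * (∑ i ∈ univ.filter (fun i => e₂ i ≤ 0), e₂ i)) :=
  hybrid_expected_point_general n e₁ e₂ p
end
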